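/- arXiv:math/0211318 — 5 statements merged into one kernel-verified Lean document; each statement's English description precedes it below -/
import Mathlib

section
/- For all n, k ≥ 0, the q-Narayana number N_q(n,k) = Σ_{w ∈ D_n, des(w)=k} q^{maj(w)} equals the Schur polynomial s_{⟨2^k⟩}(q, q^2, ..., q^{n-1}), where ⟨2^k⟩ is the partition with k parts equal to 2. -/
/-! The bijection sends a Dyck path to the tableau whose `i`-th row `(b, a)` counts the `h`- and
`v`-steps up to its `i`-th valley; that valley sits at position `a + b`, so `maj` becomes the
weight of the tableau. The inverse is explicit: the number of `h`-steps among the first `p`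
letters is `max_c min (b_c, p - a_c)` over the valleys `c` and the endpoint `(n, n)`, so a path is
recovered from these points; conversely, for rows `1 ≤ b ≤ a < n` strictly increasing in both
coordinates, this envelope is the `h`-count of a Dyck path whose valleys are exactly the rows. -/

open scoped Classical

open Finset

/-- The `i`-th letter (1-indexed) of a word `w`; `true` = vertical step `v`,
`false` = horizontal step `h`; junk value `false` out of range. -/
def ltr {m : ℕ} (w : Fin m → Bool) (i : ℕ) : Bool :=
  if h : 1 ≤ i ∧ i ≤ m then w ⟨i - 1, by omega⟩ else false

/-- The number of occurrences of the letter `b` among the first `i` letters of `w`. -/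
def pcnt {m : ℕ} (w : Fin m → Bool) (b : Bool) (i : ℕ) : ℕ :=
  ((Finset.Icc 1 i).filter fun j => ltr w j = b).card

/-- `w` is a Dyck path of length `2n`: `n` vertical steps and every prefix has at
least as many `v`'s as `h`'s. -/
def IsDyck (n : ℕ) (w : Fin (2 * n) → Bool) : Prop :=
  pcnt w true (2 * n) = n ∧ ∀ i ≤ 2 * n, pcnt w false i ≤ pcnt w true i

/-- The descent (valley) set of `w`: positions `i` with `w_i = h`, `w_{i+1} = v`. -/
def Des {n : ℕ} (w : Fin (2 * n) → Bool) : Finset ℕ :=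
  (Finset.Icc 1 (2 * n - 1)).filter fun i => ltr w i = false ∧ ltr w (i + 1) = true

section PrefixCounts

variable {m : ℕ} (w : Fin m → Bool)

lemma ltr_succ {p : ℕ} (hp : p < m) : ltr w (p + 1) = w ⟨p, hp⟩ := by
  simp [ltr, Nat.succ_le_of_lt hp]

lemma pcnt_zero (b : Bool) : pcnt w b 0 = 0 := by
  simp [pcnt]

lemma pcnt_succ (b : Bool) (i : ℕ) :
    pcnt w b (i + 1) = pcnt w b i + if ltr w (i + 1) = b then 1 else 0 := by
  rw [pcnt, ← Finset.insert_Icc_right_eq_Icc_add_one (by omega), filter_insert]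
  split_ifs <;> simp [pcnt]

lemma pcnt_true_add_pcnt_false (i : ℕ) : pcnt w true i + pcnt w false i = i := by
  simpa [pcnt] using card_filter_add_card_filter_not (s := Icc 1 i) (ltr w · = true)

lemma pcnt_mono (b : Bool) : Monotone (pcnt w b) :=
  monotone_nat_of_le_succ fun i => by rw [pcnt_succ]; omega

lemma pcnt_lt_of_lt {b : Bool} {s t : ℕ} (hst : s < t) (ht : ltr w t = b) :
    pcnt w b s < pcnt w b t := by
  obtain ⟨t, rfl⟩ : ∃ t', t = t' + 1 := ⟨t - 1, by omega⟩
  have := pcnt_mono w b (Nat.le_of_lt_succ hst)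
  rw [pcnt_succ, if_pos ht]
  omega

lemma pcnt_eq_of_forall_ne {b : Bool} {s t : ℕ} (hst : s ≤ t)
    (h : ∀ q, s < q → q ≤ t → ltr w q ≠ b) : pcnt w b t = pcnt w b s := by
  induction t, hst using Nat.le_induction with
  | base => rfl
  | succ t hst ih =>
    rw [pcnt_succ, if_neg (h _ (by omega) le_rfl), ih fun q hq hqt => h q hq (by omega),
      Nat.add_zero]

end PrefixCounts

/-- The word whose `h`-steps are the positions where `H` increases. -/
def wordOfCount (m : ℕ) (H : ℕ → ℕ) : Fin m → Bool := fun q => decide (H (q + 1) = H q)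

section WordOfCount

variable {m : ℕ} {H : ℕ → ℕ}

lemma ltr_wordOfCount_succ {p : ℕ} (hp : p < m) :
    ltr (wordOfCount m H) (p + 1) = decide (H (p + 1) = H p) :=
  ltr_succ _ hp

lemma pcnt_wordOfCount (h0 : H 0 = 0) (hstep : ∀ p, H p ≤ H (p + 1) ∧ H (p + 1) ≤ H p + 1)
    {p : ℕ} (hp : p ≤ m) : pcnt (wordOfCount m H) false p = H p := by
  induction p with
  | zero => rw [pcnt_zero, h0]
  | succ p ih =>
    rw [pcnt_succ, ih (by omega), ltr_wordOfCount_succ hp]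
    have := hstep p
    by_cases h : H (p + 1) = H p
    · simp [h]
    · simp only [h, decide_false, ↓reduceIte]
      omega

lemma wordOfCount_eq {w : Fin m → Bool} (hH : ∀ p ≤ m, H p = pcnt w false p) :
    wordOfCount m H = w := by
  funext q
  have hq := q.isLt
  rw [wordOfCount, hH _ hq.le, hH _ hq, pcnt_succ, ltr_succ w hq]
  cases w q <;> simp

end WordOfCount

/-- `cornerSup P` is the upper envelope of the functions `p ↦ min b (p - a)`, `(b, a) ∈ P`: the
number of `h`-steps among the first `p` letters of the path through the points `(b, a)`. -/
def cornerSup (P : Finset (ℕ × ℕ)) (p : ℕ) : ℕ := P.sup fun c => min c.1 (p - c.2)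

section CornerSup

variable {P : Finset (ℕ × ℕ)}

lemma cornerSup_le_iff {p r : ℕ} :
    cornerSup P p ≤ r ↔ ∀ c ∈ P, c.1 ≤ r ∨ p ≤ r + c.2 := by
  simp only [cornerSup, Finset.sup_le_iff, min_le_iff]
  exact forall₂_congr fun c _ => or_congr Iff.rfl (by omega)

lemma min_le_cornerSup {c : ℕ × ℕ} (hc : c ∈ P) (p : ℕ) :
    min c.1 (p - c.2) ≤ cornerSup P p :=
  le_sup (f := fun c => min c.1 (p - c.2)) hc

lemma cornerSup_zero : cornerSup P 0 = 0 :=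
  Nat.le_zero.1 (cornerSup_le_iff.2 fun _ _ => Or.inr (Nat.zero_le _))

lemma cornerSup_step (p : ℕ) : cornerSup P p ≤ cornerSup P (p + 1) ∧
    cornerSup P (p + 1) ≤ cornerSup P p + 1 := by
  have h := cornerSup_le_iff.1 (le_refl (cornerSup P p))
  refine ⟨cornerSup_le_iff.2 fun c hc => ?_, cornerSup_le_iff.2 fun c hc => ?_⟩
  · have := min_le_cornerSup hc (p + 1)
    omega
  · have := h c hc
    omega

lemma two_mul_cornerSup_le (hP : ∀ c ∈ P, c.1 ≤ c.2) (p : ℕ) : 2 * cornerSup P p ≤ p := by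
  have : cornerSup P p ≤ p / 2 := cornerSup_le_iff.2 fun c hc => by have := hP c hc; omega
  omega

lemma exists_corner_of_rise_flat (hP : P.Nonempty) {p : ℕ}
    (hrise : cornerSup P (p - 1) < cornerSup P p) (hflat : cornerSup P (p + 1) = cornerSup P p) :
    ∃ c ∈ P, c.1 + c.2 = p := by
  obtain ⟨c, hc, hmax⟩ := exists_mem_eq_sup P hP fun c => min c.1 (p - c.2)
  have hmax : cornerSup P p = min c.1 (p - c.2) := hmax
  have h₁ := min_le_cornerSup hc (p - 1)
  have h₂ := min_le_cornerSup hc (p + 1)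
  exact ⟨c, hc, by omega⟩

lemma cornerSup_near_corner {c : ℕ × ℕ} (hc : c ∈ P)
    (hchain : ∀ d ∈ P, d.1 < c.1 ∧ d.2 < c.2 ∨ d = c ∨ c.1 < d.1 ∧ c.2 < d.2) :
    cornerSup P (c.1 + c.2 - 1) = c.1 - 1 ∧ cornerSup P (c.1 + c.2) = c.1 ∧
      cornerSup P (c.1 + c.2 + 1) = c.1 := by
  have hle : ∀ q, c.1 + c.2 - 1 ≤ q → q ≤ c.1 + c.2 + 1 →
      cornerSup P q ≤ min c.1 (q - c.2) := fun q hq₁ hq₂ =>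
    cornerSup_le_iff.2 fun d hd => by rcases hchain d hd with h | rfl | h <;> omega
  refine ⟨?_, ?_, ?_⟩ <;>
  · refine le_antisymm ((hle _ (by omega) (by omega)).trans (by omega)) ?_
    exact le_trans (by omega) (min_le_cornerSup hc _)

end CornerSup

section Valleys

variable {n : ℕ} (w : Fin (2 * n) → Bool)

lemma mem_Des {x : ℕ} :
    x ∈ Des w ↔ (1 ≤ x ∧ x ≤ 2 * n - 1) ∧ ltr w x = false ∧ ltr w (x + 1) = true := by
  simp [Des]

lemma exists_mem_Des_of_false_true {s t : ℕ} (hs1 : 1 ≤ s) (hst : s < t) (ht2 : t ≤ 2 * n)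
    (hs : ltr w s = false) (ht : ltr w t = true) : ∃ j ∈ Des w, s ≤ j ∧ j < t := by
  by_contra! hno
  have hfalse : ∀ q, s ≤ q → q ≤ t → ltr w q = false := by
    intro q hsq
    induction q, hsq using Nat.le_induction with
    | base => exact fun _ => hs
    | succ q hsq ih =>
      intro hqt
      by_contra hq
      have hq : q ∈ Des w :=
        (mem_Des w).2 ⟨⟨by omega, by omega⟩, ih (by omega), by simpa using hq⟩
      have := hno q hq hsq
      omega
  simp [hfalse t hst.le le_rfl] at ht

/-- After an `h`-step, no `v`-step occurs before the next valley (or the end). -/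
lemma exists_corner_pcnt_true_eq {p : ℕ} (hp1 : 1 ≤ p) (hp : p ≤ 2 * n)
    (hpf : ltr w p = false) :
    ∃ c ∈ insert (2 * n) (Des w), p ≤ c ∧ pcnt w true c = pcnt w true p := by
  set S := (insert (2 * n) (Des w)).filter (p ≤ ·)
  have hS : S.Nonempty := ⟨2 * n, by simp [S, hp]⟩
  have hle : ∀ c ∈ insert (2 * n) (Des w), c ≤ 2 * n := by
    simp only [mem_insert, forall_eq_or_imp, le_refl, true_and]
    exact fun c hc => ((mem_Des w).1 hc).1.2.trans (Nat.sub_le _ _)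
  obtain ⟨hc, hpc⟩ := mem_filter.1 (S.min'_mem hS)
  refine ⟨S.min' hS, hc, hpc, pcnt_eq_of_forall_ne w hpc fun q hpq hqc hq => ?_⟩
  obtain ⟨j, hj, hpj, hjq⟩ :=
    exists_mem_Des_of_false_true w hp1 hpq (hqc.trans (hle _ hc)) hpf (by simpa using hq)
  have := S.min'_le j (mem_filter.2 ⟨mem_insert_of_mem hj, hpj⟩)
  omega

/-- Before a `v`-step, no `h`-step occurs after the previous valley (or the start). -/
lemma pcnt_false_eq_zero_or_exists_corner {p : ℕ} (hp : p ≤ 2 * n) (hpt : ltr w p = true) :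
    pcnt w false p = 0 ∨ ∃ c ∈ Des w, c < p ∧ pcnt w false c = pcnt w false p := by
  set S := (Des w).filter (· < p)
  have hcp : S.sup id ≤ p := Finset.sup_le fun j hj => (mem_filter.1 hj).2.le
  have key : pcnt w false p = pcnt w false (S.sup id) := by
    refine pcnt_eq_of_forall_ne w hcp fun q hcq hqp hq => ?_
    have hqp : q < p := lt_of_le_of_ne hqp (by rintro rfl; simp [hpt] at hq)
    obtain ⟨j, hj, hqj, hjp⟩ :=
      exists_mem_Des_of_false_true w (by omega) hqp hp (by simpa using hq) hpt
    have := le_sup (f := id) (show j ∈ S from mem_filter.2 ⟨hj, hjp⟩)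
    simp only [id] at this
    omega
  rcases S.eq_empty_or_nonempty with hS | hS
  · left
    rw [key, hS, sup_empty]
    exact pcnt_zero w false
  · obtain ⟨c, hc, hcsup⟩ := exists_mem_eq_sup S hS id
    obtain ⟨hcD, hcp⟩ := mem_filter.1 hc
    exact Or.inr ⟨c, hcD, hcp, by rw [key, hcsup, id]⟩

def pathCorners : Finset (ℕ × ℕ) :=
  (insert (2 * n) (Des w)).image fun c => (pcnt w false c, pcnt w true c)

theorem pcnt_false_eq_cornerSup {p : ℕ} (hp : p ≤ 2 * n) :
    pcnt w false p = cornerSup (pathCorners w) p := by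
  have hsum := pcnt_true_add_pcnt_false w p
  refine le_antisymm ?_ (cornerSup_le_iff.2 fun d hd => ?_)
  · suffices ∃ c ∈ insert (2 * n) (Des w),
        pcnt w false p ≤ min (pcnt w false c) (p - pcnt w true c) by
      obtain ⟨c, hc, hpc⟩ := this
      exact hpc.trans <| min_le_cornerSup
        (mem_image_of_mem (fun c => (pcnt w false c, pcnt w true c)) hc) p
    rcases Nat.eq_zero_or_pos p with rfl | hp1
    · exact ⟨2 * n, mem_insert_self _ _, by simp [pcnt_zero]⟩
    cases hpl : ltr w p
    · obtain ⟨c, hc, hpc, hv⟩ := exists_corner_pcnt_true_eq w hp1 hp hpl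
      have := pcnt_mono w false hpc
      exact ⟨c, hc, by omega⟩
    · rcases pcnt_false_eq_zero_or_exists_corner w hp hpl with h0 | ⟨c, hc, hcp, hh⟩
      · exact ⟨2 * n, mem_insert_self _ _, by omega⟩
      · have := pcnt_mono w true hcp.le
        exact ⟨c, mem_insert_of_mem hc, by omega⟩
  · obtain ⟨c, -, rfl⟩ := mem_image.1 hd
    rcases le_total c p with hcp | hpc
    · exact Or.inl (pcnt_mono w false hcp)
    · have := pcnt_mono w true hpc
      exact Or.inr (by omega)

end Valleys

/-- The two columns of a semistandard tableau of shape `⟨2^k⟩` with entries in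
`{1, …, n-1}`. -/
def IsTableau {n k : ℕ} (T : (Fin k → Fin n) × (Fin k → Fin n)) : Prop :=
  (∀ i j : Fin k, i < j → T.1 i < T.1 j) ∧
  (∀ i j : Fin k, i < j → T.2 i < T.2 j) ∧
  ∀ i : Fin k, 1 ≤ (T.1 i).val ∧ (T.1 i).val ≤ (T.2 i).val

def tableauCorners {n k : ℕ} (T : (Fin k → Fin n) × (Fin k → Fin n)) : Finset (ℕ × ℕ) :=
  insert (n, n) (univ.image fun i => ((T.1 i : ℕ), (T.2 i : ℕ)))

def tableauToPath {n k : ℕ} (T : (Fin k → Fin n) × (Fin k → Fin n)) : Fin (2 * n) → Bool :=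
  wordOfCount (2 * n) (cornerSup (tableauCorners T))

section TableauToPath

variable {n k : ℕ} {T : (Fin k → Fin n) × (Fin k → Fin n)} (hT : IsTableau T)
include hT

lemma IsTableau.fst_add_snd_strictMono : StrictMono fun i => (T.1 i : ℕ) + T.2 i :=
  fun i j hij => Nat.add_lt_add (hT.1 i j hij) (hT.2.1 i j hij)

lemma IsTableau.corner_le (c : ℕ × ℕ) (hc : c ∈ tableauCorners T) : c.1 ≤ c.2 := by
  simp only [tableauCorners, mem_insert, mem_image, mem_univ, true_and] at hc
  rcases hc with rfl | ⟨i, rfl⟩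
  exacts [le_rfl, (hT.2.2 i).2]

lemma IsTableau.corners_chain (i : Fin k) (d : ℕ × ℕ) (hd : d ∈ tableauCorners T) :
    d.1 < T.1 i ∧ d.2 < T.2 i ∨ d = ((T.1 i : ℕ), (T.2 i : ℕ)) ∨
      (T.1 i : ℕ) < d.1 ∧ (T.2 i : ℕ) < d.2 := by
  simp only [tableauCorners, mem_insert, mem_image, mem_univ, true_and] at hd
  rcases hd with rfl | ⟨j, rfl⟩
  · exact Or.inr (Or.inr ⟨(T.1 i).isLt, (T.2 i).isLt⟩)
  · rcases lt_trichotomy j i with h | rfl | h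
    exacts [Or.inl ⟨hT.1 j i h, hT.2.1 j i h⟩, Or.inr (Or.inl rfl),
      Or.inr (Or.inr ⟨hT.1 i j h, hT.2.1 i j h⟩)]

omit hT in
lemma pcnt_tableauToPath {p : ℕ} (hp : p ≤ 2 * n) :
    pcnt (tableauToPath T) false p = cornerSup (tableauCorners T) p :=
  pcnt_wordOfCount cornerSup_zero cornerSup_step hp

lemma cornerSup_tableauCorners_row (i : Fin k) :
    cornerSup (tableauCorners T) (T.1 i + T.2 i - 1) = T.1 i - 1 ∧
      cornerSup (tableauCorners T) (T.1 i + T.2 i) = T.1 i ∧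
      cornerSup (tableauCorners T) (T.1 i + T.2 i + 1) = T.1 i :=
  cornerSup_near_corner (c := ((T.1 i : ℕ), (T.2 i : ℕ)))
    (mem_insert_of_mem (mem_image_of_mem _ (mem_univ i))) (hT.corners_chain i)

lemma IsTableau.isDyck : IsDyck n (tableauToPath T) := by
  have hend : cornerSup (tableauCorners T) (2 * n) = n := by
    refine le_antisymm (cornerSup_le_iff.2 fun c hc => ?_) ?_
    · simp only [tableauCorners, mem_insert, mem_image, mem_univ, true_and] at hc
      rcases hc with rfl | ⟨i, rfl⟩
      exacts [Or.inl le_rfl, Or.inl (T.1 i).isLt.le]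
    · have := min_le_cornerSup (P := tableauCorners T) (mem_insert_self (n, n) _) (2 * n)
      dsimp only at this
      omega
  refine ⟨?_, fun i hi => ?_⟩
  · have := pcnt_true_add_pcnt_false (tableauToPath T) (2 * n)
    rw [pcnt_tableauToPath le_rfl, hend] at this
    omega
  · have hsum := pcnt_true_add_pcnt_false (tableauToPath T) i
    have := two_mul_cornerSup_le hT.corner_le i
    rw [pcnt_tableauToPath hi] at hsum ⊢
    omega

lemma IsTableau.des_tableauToPath :
    Des (tableauToPath T) = univ.image fun i => (T.1 i : ℕ) + T.2 i := by
  ext x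
  have hltr : ∀ p < 2 * n, ltr (tableauToPath T) (p + 1) =
      decide (cornerSup (tableauCorners T) (p + 1) = cornerSup (tableauCorners T) p) :=
    fun p hp => ltr_wordOfCount_succ hp
  simp only [mem_Des, mem_image, mem_univ, true_and]
  constructor
  · rintro ⟨⟨hx1, hx2⟩, hxf, hxt⟩
    obtain ⟨x, rfl⟩ : ∃ y, x = y + 1 := ⟨x - 1, by omega⟩
    rw [hltr x (by omega)] at hxf
    rw [hltr (x + 1) (by omega)] at hxt
    have hstep := cornerSup_step (P := tableauCorners T) x
    obtain ⟨c, hc, hcx⟩ := exists_corner_of_rise_flat (P := tableauCorners T)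
      (insert_nonempty _ _) (p := x + 1)
      (by rw [Nat.add_sub_cancel]; rw [decide_eq_false_iff_not] at hxf; omega)
      (by simpa using hxt)
    simp only [tableauCorners, mem_insert, mem_image, mem_univ, true_and] at hc
    rcases hc with rfl | ⟨i, rfl⟩
    exacts [absurd hcx (by omega), ⟨i, hcx⟩]
  · rintro ⟨i, rfl⟩
    obtain ⟨hb, ha⟩ := hT.2.2 i
    have hn := (T.2 i).isLt
    obtain ⟨hprev, hat, hnext⟩ := cornerSup_tableauCorners_row hT i
    refine ⟨⟨by omega, by omega⟩, ?_, ?_⟩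
    · rw [show (T.1 i : ℕ) + T.2 i = (T.1 i + T.2 i - 1) + 1 by omega, hltr _ (by omega),
        Nat.sub_add_cancel (by omega), hat, hprev, decide_eq_false_iff_not]
      omega
    · rw [hltr _ (by omega), hat, hnext]
      simp

lemma IsTableau.card_des_tableauToPath : (Des (tableauToPath T)).card = k := by
  rw [hT.des_tableauToPath, card_image_of_injective _ hT.fst_add_snd_strictMono.injective,
    card_univ, Fintype.card_fin]

end TableauToPath

section PathToTableau

variable {n k : ℕ} {w : Fin (2 * n) → Bool} (hw : IsDyck n w) (hk : (Des w).card = k)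
include hw

lemma pcnt_true_orderEmbOfFin_lt (i : Fin k) : pcnt w true ((Des w).orderEmbOfFin hk i) < n := by
  obtain ⟨hx, -, ht⟩ := (mem_Des w).1 ((Des w).orderEmbOfFin_mem hk i)
  have := pcnt_lt_of_lt w (lt_add_one _) ht
  have := pcnt_mono w true (show (Des w).orderEmbOfFin hk i + 1 ≤ 2 * n by omega)
  have := hw.1
  omega

lemma pcnt_false_orderEmbOfFin_le (i : Fin k) :
    pcnt w false ((Des w).orderEmbOfFin hk i) ≤ pcnt w true ((Des w).orderEmbOfFin hk i) :=
  hw.2 _ (((mem_Des w).1 ((Des w).orderEmbOfFin_mem hk i)).1.2.trans (Nat.sub_le _ _))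

def pathToTableau : (Fin k → Fin n) × (Fin k → Fin n) :=
  (fun i => ⟨pcnt w false ((Des w).orderEmbOfFin hk i),
      (pcnt_false_orderEmbOfFin_le hw hk i).trans_lt (pcnt_true_orderEmbOfFin_lt hw hk i)⟩,
    fun i => ⟨pcnt w true ((Des w).orderEmbOfFin hk i), pcnt_true_orderEmbOfFin_lt hw hk i⟩)

lemma isTableau_pathToTableau : IsTableau (pathToTableau hw hk) := by
  set d := (Des w).orderEmbOfFin hk
  have hd : ∀ i, (1 ≤ d i ∧ d i ≤ 2 * n - 1) ∧ ltr w (d i) = false ∧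
      ltr w (d i + 1) = true :=
    fun i => (mem_Des w).1 ((Des w).orderEmbOfFin_mem hk i)
  refine ⟨fun i j hij => ?_, fun i j hij => ?_,
    fun i => ⟨?_, pcnt_false_orderEmbOfFin_le hw hk i⟩⟩
  · exact pcnt_lt_of_lt w (d.strictMono hij) (hd j).2.1
  · exact (pcnt_lt_of_lt w (Nat.lt_succ_self _) (hd i).2.2).trans_le
      (pcnt_mono w true (d.strictMono hij))
  · have := pcnt_lt_of_lt w (hd i).1.1 (hd i).2.1
    rwa [pcnt_zero] at this

lemma tableauCorners_pathToTableau : tableauCorners (pathToTableau hw hk) = pathCorners w := by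
  have hend : pcnt w false (2 * n) = n := by
    have := pcnt_true_add_pcnt_false w (2 * n)
    have := hw.1
    omega
  rw [pathCorners, image_insert, hw.1, hend, ← image_orderEmbOfFin_univ (Des w) hk, image_image]
  rfl

lemma tableauToPath_pathToTableau : tableauToPath (pathToTableau hw hk) = w :=
  wordOfCount_eq fun _ hp => by rw [tableauCorners_pathToTableau, ← pcnt_false_eq_cornerSup w hp]

end PathToTableau

lemma pathToTableau_tableauToPath {n k : ℕ} {T : (Fin k → Fin n) × (Fin k → Fin n)}
    (hT : IsTableau T) (hw : IsDyck n (tableauToPath T))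
    (hk : (Des (tableauToPath T)).card = k) : pathToTableau hw hk = T := by
  have hd : ⇑((Des (tableauToPath T)).orderEmbOfFin hk) = fun i => (T.1 i : ℕ) + T.2 i :=
    (orderEmbOfFin_unique hk (fun i => hT.des_tableauToPath ▸ mem_image_of_mem _ (mem_univ i))
      hT.fst_add_snd_strictMono).symm
  have hfalse : ∀ i, pcnt (tableauToPath T) false (T.1 i + T.2 i) = T.1 i := fun i => by
    rw [pcnt_tableauToPath (by omega), (cornerSup_tableauCorners_row hT i).2.1]
  have htrue : ∀ i, pcnt (tableauToPath T) true (T.1 i + T.2 i) = T.2 i := fun i => by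
    have := pcnt_true_add_pcnt_false (tableauToPath T) (T.1 i + T.2 i)
    rw [hfalse] at this
    omega
  simp only [pathToTableau, hd, hfalse, htrue]

/-- The `q`-Narayana number `N_q(n,k) = Σ_{w ∈ 𝒟_n, des w = k} q^(maj w)` equals
the Schur polynomial `s_⟨2^k⟩(q, q², …, q^(n-1))`, written as the generating
function of SSYT of shape `⟨2^k⟩` with entries in `{1, …, n-1}` (encoded by the
two strictly increasing columns `T.1 ≤ T.2` with values in `Fin n`, positive). -/
theorem qNarayana_eq_schur (n k : ℕ) :
    ∑ w ∈ Finset.univ.filter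
        (fun w : Fin (2 * n) → Bool => IsDyck n w ∧ (Des w).card = k),
        (Polynomial.X : Polynomial ℤ) ^ (∑ i ∈ Des w, i) =
      ∑ T ∈ Finset.univ.filter
          (fun T : (Fin k → Fin n) × (Fin k → Fin n) =>
            (∀ i j : Fin k, i < j → T.1 i < T.1 j) ∧
            (∀ i j : Fin k, i < j → T.2 i < T.2 j) ∧
            ∀ i : Fin k, 1 ≤ (T.1 i).val ∧ (T.1 i).val ≤ (T.2 i).val),
        (Polynomial.X : Polynomial ℤ) ^ (∑ i : Fin k, ((T.1 i).val + (T.2 i).val)) := by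
  symm
  refine sum_bij' (fun T _ => tableauToPath T)
    (fun w hw => pathToTableau (mem_filter.1 hw).2.1 (mem_filter.1 hw).2.2)
    (fun T hT => ?_) (fun w hw => ?_) (fun T hT => ?_) (fun w hw => ?_) (fun T hT => ?_)
  · have hT : IsTableau T := (mem_filter.1 hT).2
    exact mem_filter.2 ⟨mem_univ _, hT.isDyck, hT.card_des_tableauToPath⟩
  · obtain ⟨-, hw, hk⟩ := mem_filter.1 hw
    exact mem_filter.2 ⟨mem_univ _, isTableau_pathToTableau hw hk⟩
  · exact pathToTableau_tableauToPath (mem_filter.1 hT).2 _ _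
  · exact tableauToPath_pathToTableau _ _
  · have hT : IsTableau T := (mem_filter.1 hT).2
    rw [hT.des_tableauToPath, sum_image fun i _ j _ h => hT.fst_add_snd_strictMono.injective h]
end

section
/- Let Δ be a pure simplicial complex and Ω a partial order on its facets with restriction r_Ω(F) = { x ∈ F : ∃ facet E with E < F in Ω and E ∩ F = F \ {x} }. Then the following conditions are equivalent: (i) for all facets F,G, if r_Ω(F) ⊆ G and r_Ω(G) ⊆ F then F = G; (ii) Δ is the disjoint union over facets F of the Boolean intervals [r_Ω(F), F]; (iii) for all facets F,G, r_Ω(F) ⊆ G implies F ≤ G in Ω; (iv) for all facets F,G with F not ≥ G, there exist x ∈ G and a facet E < G with F ∩ G ⊆ E ∩ G = G \ {x}. -/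
open scoped Classical

/-- An (abstract) simplicial complex on the vertex set `V`: contains all
singletons and is closed under taking subsets. -/
def IsComplex {V : Type*} (Δ : Set (Finset V)) : Prop :=
  (∀ x : V, {x} ∈ Δ) ∧ ∀ F ∈ Δ, ∀ G : Finset V, G ⊆ F → G ∈ Δ

/-- A facet: a maximal face. -/
def IsFacet {V : Type*} (Δ : Set (Finset V)) (F : Finset V) : Prop :=
  F ∈ Δ ∧ ∀ G ∈ Δ, F ⊆ G → G = F

/-- A pure complex: all facets have the same cardinality. -/
def IsPure {V : Type*} (Δ : Set (Finset V)) : Prop :=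
  ∀ F G : Finset V, IsFacet Δ F → IsFacet Δ G → F.card = G.card

/-- The restriction of a facet `F` with respect to a partial order `lt` on facets:
`r(F) = {x ∈ F : ∃ facet E < F with E ∩ F = F \ {x}}`. -/
noncomputable def rest {V : Type*} (Δ : Set (Finset V))
    (lt : Finset V → Finset V → Prop) (F : Finset V) : Finset V :=
  F.filter fun x => ∃ E, IsFacet Δ E ∧ lt E F ∧ E ∩ F = F \ {x}

/-- A pre-shelling: a partial order `lt` on the facets such that for all facets
`F, G` with `F` not `≥ G` there are `x ∈ G` and a facet `E < G` with
`F ∩ G ⊆ E ∩ G = G \ {x}`. -/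
def IsPreShelling {V : Type*} (Δ : Set (Finset V))
    (lt : Finset V → Finset V → Prop) : Prop :=
  ∀ F G : Finset V, IsFacet Δ F → IsFacet Δ G → ¬(G = F ∨ lt G F) →
    ∃ x ∈ G, ∃ E, IsFacet Δ E ∧ lt E G ∧ F ∩ G ⊆ E ∩ G ∧ E ∩ G = G \ {x}

/-- A shelling: a linear order on the facets such that whenever `F < G` there are
`x ∈ G` and a facet `E < G` with `F ∩ G ⊆ E ∩ G = G \ {x}`. -/
def IsShelling {V : Type*} (Δ : Set (Finset V))
    (lt : Finset V → Finset V → Prop) : Prop :=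
  (∀ F G : Finset V, IsFacet Δ F → IsFacet Δ G → F = G ∨ lt F G ∨ lt G F) ∧
  ∀ F G : Finset V, IsFacet Δ F → IsFacet Δ G → lt F G →
    ∃ x ∈ G, ∃ E, IsFacet Δ E ∧ lt E G ∧ F ∩ G ⊆ E ∩ G ∧ E ∩ G = G \ {x}

lemma rest_subset {V : Type*} (Δ : Set (Finset V))
    (lt : Finset V → Finset V → Prop) (F : Finset V) : rest Δ lt F ⊆ F :=
  Finset.filter_subset _ _

lemma mem_rest {V : Type*} {Δ : Set (Finset V)}
    {lt : Finset V → Finset V → Prop} {F : Finset V} {x : V} :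
    x ∈ rest Δ lt F ↔ x ∈ F ∧ ∃ E, IsFacet Δ E ∧ lt E F ∧ E ∩ F = F \ {x} :=
  Finset.mem_filter

/-- Every face of a finite complex is contained in a facet. -/
lemma exists_facet {V : Type*} {Δ : Set (Finset V)} (hfin : Δ.Finite)
    {A : Finset V} (hA : A ∈ Δ) : ∃ F, IsFacet Δ F ∧ A ⊆ F := by
  classical
  obtain ⟨F, hF, hmax⟩ :=
    (hfin.toFinset.filter fun B => A ⊆ B).exists_max_image Finset.card
      ⟨A, by simp [hA]⟩
  simp only [Finset.mem_filter, Set.Finite.mem_toFinset] at hF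
  refine ⟨F, ⟨hF.1, fun G hG hFG => ?_⟩, hF.2⟩
  have hG' : G ∈ hfin.toFinset.filter fun B => A ⊆ B := by
    simp [Set.Finite.mem_toFinset, hG, hF.2.trans hFG]
  exact (Finset.eq_of_subset_of_card_le hFG (hmax G hG')).symm

/-- The four defining conditions of a pre-shelling are equivalent for a partial
order `lt` on the facets of a finite pure simplicial complex. -/
theorem preShelling_tfae {V : Type*} (Δ : Set (Finset V))
    (hΔ : IsComplex Δ) (hfin : Δ.Finite) (hpure : IsPure Δ)
    (lt : Finset V → Finset V → Prop)
    (hirr : ∀ F, IsFacet Δ F → ¬ lt F F)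
    (htrans : ∀ F G H, IsFacet Δ F → IsFacet Δ G → IsFacet Δ H →
      lt F G → lt G H → lt F H) :
    List.TFAE
      [ ∀ F G, IsFacet Δ F → IsFacet Δ G →
          rest Δ lt F ⊆ G → rest Δ lt G ⊆ F → F = G,
        ∀ A ∈ Δ, ∃! F, IsFacet Δ F ∧ rest Δ lt F ⊆ A ∧ A ⊆ F,
        ∀ F G, IsFacet Δ F → IsFacet Δ G →
          rest Δ lt F ⊆ G → F = G ∨ lt F G,
        ∀ F G, IsFacet Δ F → IsFacet Δ G → ¬(G = F ∨ lt G F) →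
          ∃ x ∈ G, ∃ E, IsFacet Δ E ∧ lt E G ∧
            F ∩ G ⊆ E ∩ G ∧ E ∩ G = G \ {x} ] := by
  classical
  -- the finite set of facets, and the "down-set" of a facet
  set Fac : Finset (Finset V) := hfin.toFinset.filter (IsFacet Δ) with hFac
  set S : Finset V → Finset (Finset V) := fun G => Fac.filter (fun H => lt H G)
    with hS
  have hmemFac : ∀ {F}, IsFacet Δ F → F ∈ Fac := by
    intro F hF
    simp [hFac, Set.Finite.mem_toFinset, hF, hF.1]
  have hSsub : ∀ {E G}, IsFacet Δ E → IsFacet Δ G → lt E G → S E ⊂ S G := by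
    intro E G hE hG hEG
    constructor
    · intro H hH
      simp only [hS, Finset.mem_filter] at hH ⊢
      refine ⟨hH.1, ?_⟩
      have hHf : IsFacet Δ H := by
        have := hH.1
        simp only [hFac, Finset.mem_filter, Set.Finite.mem_toFinset] at this
        exact this.2
      exact htrans H E G hHf hE hG hH.2 hEG
    · intro hsub
      have hEmem : E ∈ S G := by
        simp [hS, Finset.mem_filter, hmemFac hE, hEG]
      have := hsub hEmem
      simp only [hS, Finset.mem_filter] at this
      exact hirr E hE this.2
  have hScard : ∀ {E G}, IsFacet Δ E → IsFacet Δ G → lt E G →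
      (S E).card < (S G).card := fun hE hG hEG =>
    Finset.card_lt_card (hSsub hE hG hEG)
  tfae_have 1 → 3 := by
    intro h1
    -- descent on the cardinality of the down-set of G
    have key : ∀ n G, IsFacet Δ G → (S G).card ≤ n → ∀ F, IsFacet Δ F →
        rest Δ lt F ⊆ G → F = G ∨ lt F G := by
      intro n
      induction n with
      | zero =>
        intro G hG hcard F hF hrF
        by_contra hcon
        push_neg at hcon
        have hrG : ¬ rest Δ lt G ⊆ F := fun h => hcon.1 (h1 F G hF hG hrF h)
        obtain ⟨x, hx, hxF⟩ := Finset.not_subset.mp hrG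
        obtain ⟨hxG, E, hE, hEG, hEint⟩ := mem_rest.mp hx
        have : E ∈ S G := by simp [hS, Finset.mem_filter, hmemFac hE, hEG]
        have := Finset.card_pos.mpr ⟨E, this⟩
        omega
      | succ n ih =>
        intro G hG hcard F hF hrF
        by_contra hcon
        push_neg at hcon
        have hrG : ¬ rest Δ lt G ⊆ F := fun h => hcon.1 (h1 F G hF hG hrF h)
        obtain ⟨x, hx, hxF⟩ := Finset.not_subset.mp hrG
        obtain ⟨hxG, E, hE, hEG, hEint⟩ := mem_rest.mp hx
        -- rest F ⊆ E
        have hrFE : rest Δ lt F ⊆ E := by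
          intro y hy
          have hyF : y ∈ F := rest_subset Δ lt F hy
          have hyG : y ∈ G := hrF hy
          have hyx : y ≠ x := fun h => hxF (h ▸ hyF)
          have : y ∈ E ∩ G := by
            rw [hEint]; simp [hyG, hyx]
          exact (Finset.mem_inter.mp this).1
        have hcardE : (S E).card ≤ n := by
          have := hScard hE hG hEG
          omega
        rcases ih E hE hcardE F hF hrFE with h | h
        · exact hcon.2 (h ▸ hEG)
        · exact hcon.2 (htrans F E G hF hE hG h hEG)
    intro F G hF hG hrF
    exact key (S G).card G hG le_rfl F hF hrF
  tfae_have 3 → 1 := by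
    intro h3 F G hF hG hFG hGF
    rcases h3 F G hF hG hFG with h | h
    · exact h
    · rcases h3 G F hG hF hGF with h' | h'
      · exact h'.symm
      · exact absurd (htrans F G F hF hG hF h h') (hirr F hF)
  tfae_have 1 → 2 := by
    intro h1 A hA
    -- existence: a lt-minimal facet containing A
    have hmin : ∀ n F, IsFacet Δ F → A ⊆ F → (S F).card ≤ n →
        ∃ F', IsFacet Δ F' ∧ A ⊆ F' ∧ ∀ E, IsFacet Δ E → A ⊆ E → ¬ lt E F' := by
      intro n
      induction n with
      | zero =>
        intro F hF hAF hcard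
        refine ⟨F, hF, hAF, fun E hE hAE hEF => ?_⟩
        have : E ∈ S F := by simp [hS, Finset.mem_filter, hmemFac hE, hEF]
        have := Finset.card_pos.mpr ⟨E, this⟩
        omega
      | succ n ih =>
        intro F hF hAF hcard
        by_cases hstop : ∀ E, IsFacet Δ E → A ⊆ E → ¬ lt E F
        · exact ⟨F, hF, hAF, hstop⟩
        · push_neg at hstop
          obtain ⟨E, hE, hAE, hEF⟩ := hstop
          have hcardE : (S E).card ≤ n := by
            have := hScard hE hF hEF
            omega
          exact ih E hE hAE hcardE
    obtain ⟨F0, hF0, hAF0⟩ := exists_facet hfin hA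
    obtain ⟨F, hF, hAF, hFmin⟩ := hmin (S F0).card F0 hF0 hAF0 le_rfl
    have hrest : rest Δ lt F ⊆ A := by
      intro x hx
      obtain ⟨hxF, E, hE, hEF, hEint⟩ := mem_rest.mp hx
      by_contra hxA
      have hAE : A ⊆ E := by
        intro y hy
        have hyF : y ∈ F := hAF hy
        have hyx : y ≠ x := fun h => hxA (h ▸ hy)
        have : y ∈ E ∩ F := by rw [hEint]; simp [hyF, hyx]
        exact (Finset.mem_inter.mp this).1
      exact hFmin E hE hAE hEF
    refine ⟨F, ⟨hF, hrest, hAF⟩, ?_⟩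
    rintro G ⟨hG, hrG, hAG⟩
    exact h1 G F hG hF (hrG.trans hAF) (hrest.trans hAG)
  tfae_have 2 → 1 := by
    intro h2 F G hF hG hFG hGF
    set A := rest Δ lt F ∪ rest Δ lt G with hA
    have hAF : A ⊆ F := Finset.union_subset (rest_subset Δ lt F) hGF
    have hAG : A ⊆ G := Finset.union_subset hFG (rest_subset Δ lt G)
    have hAΔ : A ∈ Δ := hΔ.2 F hF.1 A hAF
    obtain ⟨H, _, huniq⟩ := h2 A hAΔ
    have h1 : F = H := huniq F ⟨hF, Finset.subset_union_left, hAF⟩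
    have h2' : G = H := huniq G ⟨hG, Finset.subset_union_right, hAG⟩
    exact h1.trans h2'.symm
  tfae_have 3 → 4 := by
    intro h3 F G hF hG hcon
    have hrG : ¬ rest Δ lt G ⊆ F := by
      intro h
      rcases h3 G F hG hF h with h' | h'
      · exact hcon (Or.inl h')
      · exact hcon (Or.inr h')
    obtain ⟨x, hx, hxF⟩ := Finset.not_subset.mp hrG
    obtain ⟨hxG, E, hE, hEG, hEint⟩ := mem_rest.mp hx
    refine ⟨x, hxG, E, hE, hEG, ?_, hEint⟩
    intro y hy
    rw [hEint]
    simp only [Finset.mem_inter] at hy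
    have : y ≠ x := fun h => hxF (h ▸ hy.1)
    simp [hy.2, this]
  tfae_have 4 → 3 := by
    intro h4 F G hF hG hrF
    by_contra hcon
    obtain ⟨x, hxF, E, hE, hEF, hsub, hEint⟩ := h4 G F hG hF hcon
    have hxrest : x ∈ rest Δ lt F := mem_rest.mpr ⟨hxF, E, hE, hEF, hEint⟩
    have hxG : x ∈ G := hrF hxrest
    have : x ∈ E ∩ F := hsub (Finset.mem_inter.mpr ⟨hxG, hxF⟩)
    rw [hEint] at this
    simp at this
  tfae_finish
end

section
/- If Ω is a pre-shelling of a pure simplicial complex Δ and Λ is a partial order on the facets extending Ω (F < G in Ω implies F < G in Λ), then Λ is also a pre-shelling and r_Λ(F) = r_Ω(F) for every facet F. -/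
open scoped Classical

/-- If `Ω` (`lt₁`) is a pre-shelling of a finite pure simplicial complex and `Λ`
(`lt₂`) is a partial order on the facets extending it, then `Λ` is a pre-shelling
with the same restriction function. -/
theorem preShelling_extension {V : Type*} (Δ : Set (Finset V))
    (hΔ : IsComplex Δ) (hfin : Δ.Finite) (hpure : IsPure Δ)
    (lt₁ lt₂ : Finset V → Finset V → Prop)
    (hirr₁ : ∀ F, IsFacet Δ F → ¬ lt₁ F F)
    (htrans₁ : ∀ F G H, IsFacet Δ F → IsFacet Δ G → IsFacet Δ H →
      lt₁ F G → lt₁ G H → lt₁ F H)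
    (hirr₂ : ∀ F, IsFacet Δ F → ¬ lt₂ F F)
    (htrans₂ : ∀ F G H, IsFacet Δ F → IsFacet Δ G → IsFacet Δ H →
      lt₂ F G → lt₂ G H → lt₂ F H)
    (hext : ∀ F G, IsFacet Δ F → IsFacet Δ G → lt₁ F G → lt₂ F G)
    (hpre : IsPreShelling Δ lt₁) :
    IsPreShelling Δ lt₂ ∧ ∀ F, IsFacet Δ F → rest Δ lt₂ F = rest Δ lt₁ F := by
  constructor
  · intro F G hF hG hnot
    have hnot1 : ¬(G = F ∨ lt₁ G F) := by
      rintro (h | h)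
      · exact hnot (Or.inl h)
      · exact hnot (Or.inr (hext G F hG hF h))
    obtain ⟨x, hx, E, hE, hlt, hsub, heq⟩ := hpre F G hF hG hnot1
    exact ⟨x, hx, E, hE, hext E G hE hG hlt, hsub, heq⟩
  · intro F hF
    apply Finset.ext
    intro x
    simp only [rest, Finset.mem_filter]
    constructor
    · rintro ⟨hxF, E, hE, hlt, heq⟩
      have hne : ¬(F = E ∨ lt₁ F E) := by
        rintro (h | h)
        · exact hirr₂ E hE (h ▸ hlt)
        · exact hirr₂ F hF (htrans₂ F E F hF hE hF (hext F E hF hE h) hlt)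
      obtain ⟨y, hy, E', hE', hlt', hsub, heq'⟩ := hpre E F hE hF hne
      refine ⟨hxF, E', hE', hlt', ?_⟩
      rw [heq'] at hsub ⊢
      rw [heq] at hsub
      have hcard : F \ {x} = F \ {y} :=
        Finset.eq_of_subset_of_card_le hsub (by
          rw [Finset.card_sdiff_of_subset (by simpa using hy),
            Finset.card_sdiff_of_subset (by simpa using hxF)]; simp)
      have hxy : x = y := by
        by_contra hxy
        have hmem : x ∈ F \ {y} := Finset.mem_sdiff.mpr ⟨hxF, by simp [hxy]⟩
        rw [← hcard] at hmem
        simp at hmem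
      rw [hxy]
    · rintro ⟨hxF, E, hE, hlt, heq⟩
      exact ⟨hxF, E, hE, hext E F hE hF hlt, heq⟩
end

section
/- Every linear extension of a pre-shelling of a pure simplicial complex is a shelling, with the same restriction function; in particular, a pure simplicial complex admitting a pre-shelling is shellable and partitionable. -/
open scoped Classical

/-- Every linear extension of a pre-shelling of a finite pure simplicial complex
is a shelling, with the same restriction function; in particular the complex is
partitionable (every face lies in a unique interval `[r(F), F]`). -/
theorem linearExtension_of_preShelling_isShelling {V : Type*} (Δ : Set (Finset V))
    (hΔ : IsComplex Δ) (hfin : Δ.Finite) (hpure : IsPure Δ)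
    (lt₁ lt₂ : Finset V → Finset V → Prop)
    (hirr₁ : ∀ F, IsFacet Δ F → ¬ lt₁ F F)
    (htrans₁ : ∀ F G H, IsFacet Δ F → IsFacet Δ G → IsFacet Δ H →
      lt₁ F G → lt₁ G H → lt₁ F H)
    (hirr₂ : ∀ F, IsFacet Δ F → ¬ lt₂ F F)
    (htrans₂ : ∀ F G H, IsFacet Δ F → IsFacet Δ G → IsFacet Δ H →
      lt₂ F G → lt₂ G H → lt₂ F H)
    (htot₂ : ∀ F G, IsFacet Δ F → IsFacet Δ G → F = G ∨ lt₂ F G ∨ lt₂ G F)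
    (hext : ∀ F G, IsFacet Δ F → IsFacet Δ G → lt₁ F G → lt₂ F G)
    (hpre : IsPreShelling Δ lt₁) :
    IsShelling Δ lt₂ ∧
    (∀ F, IsFacet Δ F → rest Δ lt₂ F = rest Δ lt₁ F) ∧
    (∀ A ∈ Δ, ∃! F, IsFacet Δ F ∧ rest Δ lt₁ F ⊆ A ∧ A ⊆ F) := by
 -- proof
  have key : ∀ F G, IsFacet Δ F → IsFacet Δ G → lt₂ F G →
      ∃ x ∈ G, ∃ E, IsFacet Δ E ∧ lt₁ E G ∧ F ∩ G ⊆ E ∩ G ∧ E ∩ G = G \ {x} := by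
    intro F G hF hG h12
    apply hpre F G hF hG
    rintro (heq | h)
    · exact hirr₂ F hF (heq ▸ h12)
    · exact hirr₂ F hF (htrans₂ F G F hF hG hF h12 (hext G F hG hF h))
  have shell : IsShelling Δ lt₂ := by
    refine ⟨htot₂, ?_⟩
    intro F G hF hG h
    obtain ⟨x, hx, E, hE, hlt, hsub, heq⟩ := key F G hF hG h
    exact ⟨x, hx, E, hE, hext E G hE hG hlt, hsub, heq⟩
  have restEq : ∀ F, IsFacet Δ F → rest Δ lt₂ F = rest Δ lt₁ F := by
    intro F hF
    apply Finset.ext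
    intro x
    simp only [rest, Finset.mem_filter]
    constructor
    · rintro ⟨hxF, E, hE, hlt, heq⟩
      refine ⟨hxF, ?_⟩
      obtain ⟨y, hy, E', hE', hlt', hsub, heq'⟩ := key E F hE hF hlt
      have hyx : y = x := by
        by_contra hne
        have hmem : y ∈ E ∩ F := by
          rw [heq]; simp [hy, hne]
        have := hsub hmem
        rw [heq'] at this
        simp at this
      subst hyx
      exact ⟨E', hE', hlt', heq'⟩
    · rintro ⟨hxF, E, hE, hlt, heq⟩
      exact ⟨hxF, E, hE, hext E F hE hF hlt, heq⟩
  refine ⟨shell, restEq, ?_⟩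
  intro A hA
  -- the finite set of facets containing A
  set T : Finset (Finset V) := hfin.toFinset.filter (fun F => IsFacet Δ F ∧ A ⊆ F) with hT
  have hTmem : ∀ F, F ∈ T ↔ IsFacet Δ F ∧ A ⊆ F := by
    intro F
    simp only [hT, Finset.mem_filter, Set.Finite.mem_toFinset]
    exact ⟨fun h => h.2, fun h => ⟨h.1.1, h⟩⟩
  have hTne : T.Nonempty := by
    -- find a facet containing A by maximizing cardinality among faces containing A
    set S : Finset (Finset V) := hfin.toFinset.filter (fun F => A ⊆ F) with hS
    have hAS : A ∈ S := by
      simp [hS, Set.Finite.mem_toFinset, hA]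
    obtain ⟨B, hBS, hBmax⟩ := S.exists_max_image Finset.card ⟨A, hAS⟩
    simp only [hS, Finset.mem_filter, Set.Finite.mem_toFinset] at hBS
    have hBfacet : IsFacet Δ B := by
      refine ⟨hBS.1, fun C hC hBC => ?_⟩
      have hCS : C ∈ S := by
        simp only [hS, Finset.mem_filter, Set.Finite.mem_toFinset]
        exact ⟨hC, hBS.2.trans hBC⟩
      exact (Finset.eq_of_subset_of_card_le hBC (hBmax C hCS)).symm
    exact ⟨B, (hTmem B).2 ⟨hBfacet, hBS.2⟩⟩
  -- pick a lt₂-minimal element of T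
  obtain ⟨F, hFT, hFmin⟩ := T.exists_min_image
    (fun F => (T.filter (fun C => lt₂ C F)).card) hTne
  obtain ⟨hFfacet, hAF⟩ := (hTmem F).1 hFT
  have hFminimal : ∀ B ∈ T, ¬ lt₂ B F := by
    intro B hB hBF
    obtain ⟨hBfacet, _⟩ := (hTmem B).1 hB
    have hss : T.filter (fun C => lt₂ C B) ⊂ T.filter (fun C => lt₂ C F) := by
      refine ⟨fun C hC => ?_, fun hsub => ?_⟩
      · simp only [Finset.mem_filter] at hC ⊢
        obtain ⟨hCfacet, _⟩ := (hTmem C).1 hC.1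
        exact ⟨hC.1, htrans₂ C B F hCfacet hBfacet hFfacet hC.2 hBF⟩
      · have : B ∈ T.filter (fun C => lt₂ C B) := hsub (by simp [Finset.mem_filter, hB, hBF])
        simp only [Finset.mem_filter] at this
        exact hirr₂ B hBfacet this.2
    exact absurd (hFmin B hB) (not_le.mpr (Finset.card_lt_card hss))
  -- existence
  have hrest : rest Δ lt₁ F ⊆ A := by
    intro x hx
    by_contra hxA
    simp only [rest, Finset.mem_filter] at hx
    obtain ⟨hxF, E, hE, hlt, heq⟩ := hx
    have hAE : A ⊆ E := by
      intro a ha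
      have : a ∈ F \ {x} := by
        simp only [Finset.mem_sdiff, Finset.mem_singleton]
        exact ⟨hAF ha, fun h => hxA (h ▸ ha)⟩
      rw [← heq] at this
      exact (Finset.mem_inter.1 this).1
    exact hFminimal E ((hTmem E).2 ⟨hE, hAE⟩) (hext E F hE hFfacet hlt)
  refine ⟨F, ⟨hFfacet, hrest, hAF⟩, ?_⟩
  -- uniqueness
  intro G ⟨hGfacet, hGrest, hAG⟩
  rcases htot₂ G F hGfacet hFfacet with h | h | h
  · exact h
  · obtain ⟨x, hx, E, hE, hlt, hsub, heq⟩ := key G F hGfacet hFfacet h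
    have hxr : x ∈ rest Δ lt₁ F := by
      simp only [rest, Finset.mem_filter]
      exact ⟨hx, E, hE, hlt, heq⟩
    have hxG : x ∈ G := hAG (hrest hxr)
    have : x ∈ E ∩ F := hsub (Finset.mem_inter.2 ⟨hxG, hx⟩)
    rw [heq] at this
    simp at this
  · obtain ⟨x, hx, E, hE, hlt, hsub, heq⟩ := key F G hFfacet hGfacet h
    have hxr : x ∈ rest Δ lt₁ G := by
      simp only [rest, Finset.mem_filter]
      exact ⟨hx, E, hE, hlt, heq⟩
    have hxF : x ∈ F := hAF (hGrest hxr)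
    have : x ∈ E ∩ G := hsub (Finset.mem_inter.2 ⟨hxF, hx⟩)
    rw [heq] at this
    simp at this
end

section
/- The relation Ω_n on Dyck paths of length 2n, generated by the local moves replacing a factor vvh by vhv or a factor hhv by hvh (with u < w iff u ≠ w and u is obtained from w by a sequence of such moves), is a partial order (in particular, it is antisymmetric/acyclic). -/
open Finset

/-- `Move w u` : `u` is obtained from `w` by one (nontrivial) local move replacing
a factor `vvh` by `vhv` or a factor `hhv` by `hvh` at positions `i, i+1, i+2`. -/
def Move {n : ℕ} (w u : Fin (2 * n) → Bool) : Prop :=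
  ∃ i : ℕ, 1 ≤ i ∧ i + 2 ≤ 2 * n ∧
    ltr w i = ltr w (i + 1) ∧ ltr w (i + 1) ≠ ltr w (i + 2) ∧
    ltr u (i + 1) = ltr w (i + 2) ∧ ltr u (i + 2) = ltr w (i + 1) ∧
    ∀ j : ℕ, j ≠ i + 1 → j ≠ i + 2 → ltr u j = ltr w j

/-- The relation `Ω_n`: `u` is below `w` when `u` is obtained from `w` by a
(nonempty) sequence of moves. -/
def OmegaRel {n : ℕ} (u w : Fin (2 * n) → Bool) : Prop :=
  Relation.TransGen (fun a b => Move b a) u w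

/-- Local contribution at position `j`: a big weight for a double ascent plus
the descent position (major-index contribution). -/
def gfun {n : ℕ} (w : Fin (2 * n) → Bool) (j : ℕ) : ℕ :=
  (if ltr w j = true ∧ ltr w (j + 1) = true then 6 * n + 1 else 0) +
  (if ltr w j = false ∧ ltr w (j + 1) = true then j else 0)

/-- The measure `(6n+1)·da(w) + maj(w)`. -/
def mu {n : ℕ} (w : Fin (2 * n) → Bool) : ℕ :=
  ∑ j ∈ Finset.Icc 1 (2 * n), gfun w j

lemma mu_lt_of_move {n : ℕ} {w u : Fin (2 * n) → Bool} (h : Move w u) :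
    mu u < mu w := by
  obtain ⟨i, hi1, hi2, heq, hne, hu1, hu2, hrest⟩ := h
  set t : Finset ℕ := {i, i + 1, i + 2} with ht
  have hsub : t ⊆ Finset.Icc 1 (2 * n) := by
    intro j hj
    simp only [ht, Finset.mem_insert, Finset.mem_singleton] at hj
    simp only [Finset.mem_Icc]
    omega
  have hsplit : ∀ v : Fin (2 * n) → Bool,
      mu v = ∑ j ∈ Finset.Icc 1 (2 * n) \ t, gfun v j + ∑ j ∈ t, gfun v j := by
    intro v
    rw [mu, Finset.sum_sdiff hsub]
  have houter : ∑ j ∈ Finset.Icc 1 (2 * n) \ t, gfun u j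
      = ∑ j ∈ Finset.Icc 1 (2 * n) \ t, gfun w j := by
    apply Finset.sum_congr rfl
    intro j hj
    simp only [Finset.mem_sdiff, ht, Finset.mem_insert, Finset.mem_singleton, not_or] at hj
    obtain ⟨_, hj1, hj2, hj3⟩ := hj
    have e1 : ltr u j = ltr w j := hrest j hj2 hj3
    have e2 : ltr u (j + 1) = ltr w (j + 1) := by
      apply hrest <;> omega
    simp [gfun, e1, e2]
  have htsum : ∀ v : Fin (2 * n) → Bool,
      ∑ j ∈ t, gfun v j = gfun v i + gfun v (i + 1) + gfun v (i + 2) := by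
    intro v
    rw [ht]
    rw [Finset.sum_insert (by simp only [Finset.mem_insert, Finset.mem_singleton]; omega),
      Finset.sum_insert (by simp only [Finset.mem_singleton]; omega),
      Finset.sum_singleton]
    ring
  rw [hsplit u, hsplit w, houter, htsum u, htsum w]
  have hkey : gfun u i + gfun u (i + 1) + gfun u (i + 2)
      < gfun w i + gfun w (i + 1) + gfun w (i + 2) := by
    have eui : ltr u i = ltr w i := hrest i (by omega) (by omega)
    have eu3 : ltr u (i + 3) = ltr w (i + 3) := by
      apply hrest <;> omega
    have hne' : ltr w (i + 2) = !(ltr w (i + 1)) := by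
      cases hb : ltr w (i + 1) <;> cases hc : ltr w (i + 2) <;> simp_all
    simp only [gfun, eui, eu3, hu1, hu2, hne', ← heq,
      show i + 1 + 1 = i + 2 from rfl, show i + 2 + 1 = i + 3 from rfl]
    cases hb : ltr w i <;> cases hc : ltr w (i + 3) <;> simp <;> omega
  omega

lemma mu_lt_of_omega {n : ℕ} {u w : Fin (2 * n) → Bool} (h : OmegaRel u w) :
    mu u < mu w := by
  induction h with
  | single h => exact mu_lt_of_move h
  | tail _ hstep ih => exact lt_trans ih (mu_lt_of_move hstep)

/-- The relation `Ω_n` generated by the local moves `vvh → vhv`, `hhv → hvh` on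
Dyck paths is antisymmetric, hence a partial order. -/
theorem omega_antisymm (n : ℕ) (u w : Fin (2 * n) → Bool)
    (hu : IsDyck n u) (hw : IsDyck n w)
    (h₁ : OmegaRel u w) (h₂ : OmegaRel w u) : u = w := by
  have a := mu_lt_of_omega h₁
  have b := mu_lt_of_omega h₂
  omega
end
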